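/- Consider the LDP-SGD random gradient sampling mechanism M on the unit sphere: given input z, sample v uniformly from the unit sphere S^d and output sgn(⟨z,v⟩)·v with probability e^ε/(1+e^ε) and −sgn(⟨z,v⟩)·v otherwise. For any two inputs z, z' with ‖z‖ = ‖z'‖ = L and any measurable set of outputs S, Pr[M(z) ∈ S] ≤ e^ε · Pr[M(z') ∈ S]; i.e., M satisfies ε-LDP. -/

import Mathlib

open MeasureTheory
open scoped RealInnerProductSpace ENNReal

/-- The sign function used by LDP-SGD: `1` if `0 ≤ t`, else `-1`. -/
noncomputable def ldpSgn (t : ℝ) : ℝ := if 0 ≤ t then 1 else -1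

section Aux

variable {d : ℕ}

lemma meas_T (z : EuclideanSpace ℝ (Fin d)) :
    Measurable fun v : EuclideanSpace ℝ (Fin d) => ldpSgn ⟪z, v⟫ • v := by
  have h1 : Measurable fun v : EuclideanSpace ℝ (Fin d) => ldpSgn ⟪z, v⟫ := by
    unfold ldpSgn
    exact Measurable.ite
      (measurableSet_le measurable_const
        (Continuous.measurable (continuous_const.inner continuous_id)))
      measurable_const measurable_const
  exact h1.smul measurable_id

lemma T_cases (z v : EuclideanSpace ℝ (Fin d)) :
    ldpSgn ⟪z, v⟫ • v = v ∨ ldpSgn ⟪z, v⟫ • v = -v := by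
  unfold ldpSgn
  split
  · left; simp
  · right; simp [neg_smul]

lemma key_sum (μ : Measure (EuclideanSpace ℝ (Fin d))) (z : EuclideanSpace ℝ (Fin d))
    (S : Set (EuclideanSpace ℝ (Fin d))) (hS : MeasurableSet S) :
    μ ((fun v => ldpSgn ⟪z, v⟫ • v) ⁻¹' S) + μ ((fun v => -(ldpSgn ⟪z, v⟫ • v)) ⁻¹' S)
      = μ S + μ ((fun v : EuclideanSpace ℝ (Fin d) => -v) ⁻¹' S) := by
  set A := (fun v => ldpSgn ⟪z, v⟫ • v) ⁻¹' S with hA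
  set B := (fun v => -(ldpSgn ⟪z, v⟫ • v)) ⁻¹' S with hB
  set N := (fun v : EuclideanSpace ℝ (Fin d) => -v) ⁻¹' S with hN
  have hBmeas : MeasurableSet B := (meas_T z).neg hS
  have hNmeas : MeasurableSet N := (measurable_id.neg (α := EuclideanSpace ℝ (Fin d))) hS
  have hU : A ∪ B = S ∪ N := by
    ext v
    simp only [Set.mem_union, hA, hB, hN, Set.mem_preimage]
    rcases T_cases z v with h | h <;> rw [h] <;> simp [neg_neg] <;> tauto
  have hI : A ∩ B = S ∩ N := by
    ext v
    simp only [Set.mem_inter_iff, hA, hB, hN, Set.mem_preimage]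
    rcases T_cases z v with h | h <;> rw [h] <;> simp [neg_neg] <;> tauto
  calc μ A + μ B = μ (A ∪ B) + μ (A ∩ B) := (measure_union_add_inter A hBmeas).symm
    _ = μ (S ∪ N) + μ (S ∩ N) := by rw [hU, hI]
    _ = μ S + μ N := measure_union_add_inter S hNmeas

end Aux

/-- LDP-SGD random gradient sampling: draw `v` uniformly (i.e. from an
isometry-invariant probability measure `μ` on the unit sphere of `ℝ^d`) and output
`sgn⟨z,v⟩ • v` with probability `e^ε/(1+e^ε)`, and `-sgn⟨z,v⟩ • v` otherwise.
For any two inputs of equal norm `L`, this mechanism satisfies `ε`-LDP. -/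
theorem ldp_sgd_sampling_is_ldp (d : ℕ) (hd : 1 ≤ d) (ε L : ℝ) (hε : 0 < ε) (hL : 0 < L)
    (μ : Measure (EuclideanSpace ℝ (Fin d))) [IsProbabilityMeasure μ]
    (hsupp : μ (Metric.sphere (0 : EuclideanSpace ℝ (Fin d)) 1) = 1)
    (hinv : ∀ f : EuclideanSpace ℝ (Fin d) ≃ₗᵢ[ℝ] EuclideanSpace ℝ (Fin d),
      μ.map f = μ)
    (M : EuclideanSpace ℝ (Fin d) → Measure (EuclideanSpace ℝ (Fin d)))
    (hM : ∀ z, M z =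
      ENNReal.ofReal (Real.exp ε / (1 + Real.exp ε)) •
        μ.map (fun v => ldpSgn ⟪z, v⟫ • v) +
      ENNReal.ofReal (1 / (1 + Real.exp ε)) •
        μ.map (fun v => -(ldpSgn ⟪z, v⟫ • v)))
    (z z' : EuclideanSpace ℝ (Fin d)) (hz : ‖z‖ = L) (hz' : ‖z'‖ = L)
    (S : Set (EuclideanSpace ℝ (Fin d))) (hS : MeasurableSet S) :
    M z S ≤ ENNReal.ofReal (Real.exp ε) * M z' S := by
  set p : ℝ := Real.exp ε / (1 + Real.exp ε) with hp
  set q : ℝ := 1 / (1 + Real.exp ε) with hq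
  have hden : (0:ℝ) < 1 + Real.exp ε := by positivity
  have hqp : q ≤ p := by
    rw [hp, hq, div_le_div_iff₀ hden hden]
    nlinarith [Real.one_le_exp hε.le]
  set P := ENNReal.ofReal p with hP
  set Q := ENNReal.ofReal q with hQ
  set E := ENNReal.ofReal (Real.exp ε) with hE
  have hEQ : E * Q = P := by
    rw [hE, hQ, hP, ← ENNReal.ofReal_mul (Real.exp_pos ε).le]
    congr 1
    rw [hp, hq]
    ring
  have hQP : Q ≤ P := ENNReal.ofReal_le_ofReal hqp
  set a := μ ((fun v => ldpSgn ⟪z, v⟫ • v) ⁻¹' S) with ha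
  set b := μ ((fun v => -(ldpSgn ⟪z, v⟫ • v)) ⁻¹' S) with hb
  set a' := μ ((fun v => ldpSgn ⟪z', v⟫ • v) ⁻¹' S) with ha'
  set b' := μ ((fun v => -(ldpSgn ⟪z', v⟫ • v)) ⁻¹' S) with hb'
  set k := μ S + μ ((fun v : EuclideanSpace ℝ (Fin d) => -v) ⁻¹' S) with hk
  have hab : a + b = k := key_sum μ z S hS
  have hab' : a' + b' = k := key_sum μ z' S hS
  have hMz : M z S = P * a + Q * b := by
    rw [hM z]
    simp only [Measure.coe_add, Measure.coe_smul, Pi.add_apply, Pi.smul_apply, smul_eq_mul]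
    rw [Measure.map_apply (meas_T z) hS, Measure.map_apply (show Measurable fun v : EuclideanSpace ℝ (Fin d) => -(ldpSgn ⟪z, v⟫ • v) from (meas_T z).neg) hS]
  have hMz' : M z' S = P * a' + Q * b' := by
    rw [hM z']
    simp only [Measure.coe_add, Measure.coe_smul, Pi.add_apply, Pi.smul_apply, smul_eq_mul]
    rw [Measure.map_apply (meas_T z') hS, Measure.map_apply (show Measurable fun v : EuclideanSpace ℝ (Fin d) => -(ldpSgn ⟪z', v⟫ • v) from (meas_T z').neg) hS]
  calc M z S = P * a + Q * b := hMz
    _ ≤ P * a + P * b := add_le_add_right (mul_le_mul_left hQP b) _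
    _ = P * k := by rw [← mul_add, hab]
    _ = E * Q * k := by rw [hEQ]
    _ = E * (Q * a' + Q * b') := by rw [mul_assoc, ← mul_add, hab']
    _ ≤ E * (P * a' + Q * b') := by
        exact mul_le_mul_right (add_le_add_left (mul_le_mul_left hQP a') _) _
    _ = E * M z' S := by rw [hMz']
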